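/- arXiv:2201.13250 — 2 statements merged into one kernel-verified Lean document; each statement's English description precedes it below -/
import Mathlib

section
/- Let s ∈ ℕ, let V be a finite-dimensional normed complex vector space, let L : (ℂ²)^{⊗s} →ₗ[ℂ] V be a linear map, and let g_j : ℝ → ℝ (j = 1,…,s) each be differentiable at θ₀ ∈ ℝ. Then the function θ ↦ L(⊗_{j=1}^s (e₀ + exp(i·g_j(θ))·e₁)) is differentiable at θ₀ with derivative i · Σ_{j=1}^s g_j'(θ₀) · exp(i·g_j(θ₀)) · L(v_1 ⊗ ⋯ ⊗ v_s), where v_j = e₁ and v_l = e₀ + exp(i·g_l(θ₀))·e₁ for l ≠ j. (This expresses the derivative of any parameterised ZX diagram with phases g_j(θ) as a single diagram.) -/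
/-! The diagram is `L` applied to the tensor product of the phase vectors `e₀ + e^{iφ_j} e₁`, a
multilinear function of them; on finite-dimensional spaces every multilinear map is continuous,
hence differentiable, and the Leibniz rule differentiates one factor at a time. The factor
`e₀ + e^{iφ} e₁` has derivative `i φ' e^{iφ} e₁`, which is where the single replaced `e₁` and the
scalar `i g_j' e^{i g_j}` come from. -/

open scoped TensorProduct

noncomputable section

/-- `ℂ²` with standard basis vectors. -/
abbrev C2 : Type := ℂ × ℂ

def e0 : C2 := (1, 0)
def e1 : C2 := (0, 1)

theorem MultilinearMap.continuous_of_finiteDimensional {𝕜 : Type*} [NontriviallyNormedField 𝕜]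
    [CompleteSpace 𝕜] {ι : Type*} [Fintype ι] {E : ι → Type*}
    [∀ i, NormedAddCommGroup (E i)] [∀ i, NormedSpace 𝕜 (E i)] [∀ i, FiniteDimensional 𝕜 (E i)]
    {F : Type*} [NormedAddCommGroup F] [NormedSpace 𝕜 F] (f : MultilinearMap 𝕜 E F) :
    Continuous f := by
  classical
  let b := fun i => Module.finBasis 𝕜 (E i)
  have expand : ⇑f = fun m => ∑ k : ∀ i, Fin (Module.finrank 𝕜 (E i)),
      (∏ i, (b i).repr (m i) (k i)) • f (fun i => b i (k i)) := by
    funext m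
    conv_lhs => rw [← funext fun i => (b i).sum_repr (m i)]
    rw [f.map_sum]
    exact Finset.sum_congr rfl fun k _ => f.map_smul_univ _ _
  rw [expand]
  refine continuous_finsetSum _ fun k _ => (continuous_finsetProd _ fun i _ => ?_).smul
    continuous_const
  exact ((LinearMap.continuous_of_finiteDimensional ((b i).coord (k i))).comp
    (continuous_apply i))

theorem ContinuousMultilinearMap.hasDerivAt_comp {ι : Type*} [Fintype ι] [DecidableEq ι]
    {E : ι → Type*} [∀ i, NormedAddCommGroup (E i)] [∀ i, NormedSpace ℂ (E i)]
    {F : Type*} [NormedAddCommGroup F] [NormedSpace ℂ F]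
    (M : ContinuousMultilinearMap ℂ E F) {c : ℝ → ∀ i, E i} {c' : ∀ i, E i} {t : ℝ}
    (hc : ∀ i, HasDerivAt (fun θ => c θ i) (c' i) t) :
    HasDerivAt (fun θ => M (c θ)) (∑ i, M (Function.update (c t) i (c' i))) t := by
  have hcurve : HasDerivAt c c' t := hasDerivAt_pi.2 hc
  simpa [Function.comp_def, ContinuousMultilinearMap.linearDeriv_apply] using
    ((M.hasFDerivAt (c t)).restrictScalars ℝ).comp_hasDerivAt t hcurve

theorem HasDerivAt.const_add_cexp_I_mul_smul {E : Type*} [NormedAddCommGroup E]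
    [NormedSpace ℂ E] (a b : E) {φ : ℝ → ℝ} {φ' t : ℝ} (hφ : HasDerivAt φ φ' t) :
    HasDerivAt (fun θ => a + Complex.exp (Complex.I * φ θ) • b)
      ((Complex.I * φ' * Complex.exp (Complex.I * φ t)) • b) t := by
  have hexp := (hφ.ofReal_comp.const_mul Complex.I).cexp
  simpa only [mul_comm (Complex.exp _)] using (hexp.smul_const b).const_add a

theorem deriv_parameterised_zx_diagram_general (s : ℕ) (V : Type*) [NormedAddCommGroup V]
    [NormedSpace ℂ V]
    (L : (⨂[ℂ] _ : Fin s, C2) →ₗ[ℂ] V)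
    (g : Fin s → ℝ → ℝ) (g' : Fin s → ℝ) (θ₀ : ℝ)
    (hg : ∀ j, HasDerivAt (g j) (g' j) θ₀) :
    HasDerivAt
      (fun θ : ℝ => L (⨂ₜ[ℂ] j, (e0 + Complex.exp (Complex.I * (g j θ : ℂ)) • e1)))
      (Complex.I • ∑ j : Fin s,
        ((g' j : ℂ) * Complex.exp (Complex.I * (g j θ₀ : ℂ))) •
          L (⨂ₜ[ℂ] l,
            (if l = j then e1 else e0 + Complex.exp (Complex.I * (g l θ₀ : ℂ)) • e1)))
      θ₀ := by
  let M : ContinuousMultilinearMap ℂ (fun _ : Fin s => C2) V :=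
    ⟨L.compMultilinearMap (PiTensorProduct.tprod ℂ),
      MultilinearMap.continuous_of_finiteDimensional _⟩
  have hM := M.hasDerivAt_comp fun j => (hg j).const_add_cexp_I_mul_smul e0 e1
  refine hM.congr_deriv ?_
  rw [Finset.smul_sum]
  refine Finset.sum_congr rfl fun j _ => ?_
  rw [M.map_update_smul, smul_smul, ← mul_assoc]
  exact congrArg _ (congrArg M (funext fun l => Function.update_apply _ _ _ _))

/-- the derivative of any parameterised ZX diagram with phases
`g_j θ` expressed as a single diagram. -/
theorem deriv_parameterised_zx_diagram (s : ℕ) (V : Type*) [NormedAddCommGroup V]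
    [NormedSpace ℂ V] [FiniteDimensional ℂ V]
    (L : (⨂[ℂ] _ : Fin s, C2) →ₗ[ℂ] V)
    (g : Fin s → ℝ → ℝ) (g' : Fin s → ℝ) (θ₀ : ℝ)
    (hg : ∀ j, HasDerivAt (g j) (g' j) θ₀) :
    HasDerivAt
      (fun θ : ℝ => L (⨂ₜ[ℂ] j, (e0 + Complex.exp (Complex.I * (g j θ : ℂ)) • e1)))
      (Complex.I • ∑ j : Fin s,
        ((g' j : ℂ) * Complex.exp (Complex.I * (g j θ₀ : ℂ))) •
          L (⨂ₜ[ℂ] l,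
            (if l = j then e1 else e0 + Complex.exp (Complex.I * (g l θ₀ : ℂ)) • e1)))
      θ₀ :=
  deriv_parameterised_zx_diagram_general s V L g g' θ₀ hg
end
end

section
/- Let k be a nonzero integer, let m, n ∈ ℕ, and let A be a complex (2^{3+n}) × (2^{3+m}) matrix. For α ∈ ℝ let r(α) = (1, e^{ikα})ᵀ and define the 2^n × 2^m matrix Q(α) = ((r(−α)ᵀ ⊗ r(−α)ᵀ ⊗ r(−α)ᵀ) ⊗ I_{2^n}) · A · ((r(α) ⊗ r(α) ⊗ r(α)) ⊗ I_{2^m}). Then (1/(2π)) · ∫_{−π}^{π} Q(α) dα = (⟨000| ⊗ I_{2^n}) A (|000⟩ ⊗ I_{2^m}) + (⟨111| ⊗ I_{2^n}) A (|111⟩ ⊗ I_{2^m}) + ((⟨001| + ⟨010| + ⟨100|) ⊗ I_{2^n}) A ((|001⟩ + |010⟩ + |100⟩) ⊗ I_{2^m}) + ((⟨011| + ⟨101| + ⟨110|) ⊗ I_{2^n}) A ((|011⟩ + |101⟩ + |110⟩) ⊗ I_{2^m}), where for x,y,z ∈ {0,1}, |xyz⟩ = |x⟩ ⊗ |y⟩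 ⊗ |z⟩ and ⟨xyz| is its transpose. -/
open Matrix MeasureTheory
open scoped Kronecker

noncomputable section

/-- Standard basis kets of `ℂ²` as `2 × 1` column matrices. -/
def ket (x : Fin 2) : Matrix (Fin 2) (Fin 1) ℂ := fun i _ => if i = x then 1 else 0

/-- `|xyz⟩ = |x⟩ ⊗ |y⟩ ⊗ |z⟩` as a column matrix. -/
def ket3 (x y z : Fin 2) : Matrix ((Fin 2 × Fin 2) × Fin 2) ((Fin 1 × Fin 1) × Fin 1) ℂ :=
  (ket x ⊗ₖ ket y) ⊗ₖ ket z

/-- The column `r(α) = (1, e^{ikα})ᵀ`. -/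
def r (k : ℤ) (α : ℝ) : Matrix (Fin 2) (Fin 1) ℂ :=
  !![1; Complex.exp (Complex.I * (k : ℂ) * (α : ℂ))]

def wt (p : (Fin 2 × Fin 2) × Fin 2) : ℕ := p.1.1.val + p.1.2.val + p.2.val

lemma int_exp (c : ℤ) :
    ∫ α in (-Real.pi)..Real.pi, Complex.exp (Complex.I * c * α) =
    if c = 0 then (2 * Real.pi : ℂ) else 0 := by
  by_cases hc : c = 0
  · simp [hc]; ring
  · rw [if_neg hc]
    have hne : (Complex.I * c : ℂ) ≠ 0 := by
      simp [Complex.I_ne_zero, Complex.ext_iff, hc]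
    have := integral_exp_mul_complex (a := -Real.pi) (b := Real.pi) hne
    simp only [mul_assoc] at this ⊢
    rw [this]
    have hsin : Complex.sin (c * Real.pi) = 0 := by
      exact_mod_cast Complex.sin_int_mul_pi c
    rw [Complex.sin, div_eq_zero_iff, mul_eq_zero] at hsin
    simp only [Complex.I_ne_zero, or_false, OfNat.ofNat_ne_zero] at hsin
    rw [sub_eq_zero] at hsin
    rw [div_eq_zero_iff]; left
    rw [sub_eq_zero]
    push_cast
    rw [show Complex.I * (c * Real.pi) = (c * Real.pi : ℂ) * Complex.I by ring,
        show Complex.I * (c * -Real.pi) = -(c * Real.pi : ℂ) * Complex.I by ring]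
    exact hsin.symm

set_option maxHeartbeats 1000000 in
set_option synthInstance.maxHeartbeats 400000 in
lemma expand {N M : ℕ} (u : Matrix ((Fin 1 × Fin 1) × Fin 1) ((Fin 2 × Fin 2) × Fin 2) ℂ)
    (v : Matrix ((Fin 2 × Fin 2) × Fin 2) ((Fin 1 × Fin 1) × Fin 1) ℂ)
    (A : Matrix (((Fin 2 × Fin 2) × Fin 2) × Fin N) (((Fin 2 × Fin 2) × Fin 2) × Fin M) ℂ)
    (i : ((Fin 1 × Fin 1) × Fin 1) × Fin N) (j : ((Fin 1 × Fin 1) × Fin 1) × Fin M) :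
    ((u ⊗ₖ (1 : Matrix (Fin N) (Fin N) ℂ)) * A * (v ⊗ₖ (1 : Matrix (Fin M) (Fin M) ℂ))) i j
    = ∑ p : (Fin 2 × Fin 2) × Fin 2, ∑ q : (Fin 2 × Fin 2) × Fin 2,
        u i.1 p * A (p, i.2) (q, j.2) * v q j.1 := by
  simp [Matrix.mul_apply, Matrix.one_apply, Fintype.sum_prod_type, Finset.sum_mul,
    Finset.mul_sum, mul_ite, ite_mul, mul_assoc]
  ring

lemma rfac (k : ℤ) (β : ℝ) (a : (Fin 1 × Fin 1) × Fin 1) (p : (Fin 2 × Fin 2) × Fin 2) :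
    (((r k β)ᵀ ⊗ₖ (r k β)ᵀ) ⊗ₖ (r k β)ᵀ) a p
      = Complex.exp (Complex.I * k * β) ^ wt p := by
  obtain ⟨⟨x, y⟩, z⟩ := p
  obtain ⟨⟨⟨_, _⟩, ⟨_, _⟩⟩, ⟨_, _⟩⟩ := a
  fin_cases x <;> fin_cases y <;> fin_cases z <;>
    simp [r, wt, Matrix.vecHead, Matrix.vecTail, Matrix.transpose_apply, kroneckerMap_apply,
      Fin.fin_one_eq_zero] <;> ring

lemma cfac (k : ℤ) (β : ℝ) (a : (Fin 1 × Fin 1) × Fin 1) (p : (Fin 2 × Fin 2) × Fin 2) :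
    ((r k β ⊗ₖ r k β) ⊗ₖ r k β) p a
      = Complex.exp (Complex.I * k * β) ^ wt p := by
  obtain ⟨⟨x, y⟩, z⟩ := p
  obtain ⟨⟨⟨_, _⟩, ⟨_, _⟩⟩, ⟨_, _⟩⟩ := a
  fin_cases x <;> fin_cases y <;> fin_cases z <;>
    simp [r, wt, Matrix.vecHead, Matrix.vecTail, kroneckerMap_apply, Fin.fin_one_eq_zero] <;> ring

lemma coef (p q : (Fin 2 × Fin 2) × Fin 2) (a b : (Fin 1 × Fin 1) × Fin 1) :
    ket3 0 0 0 p a * ket3 0 0 0 q b + ket3 1 1 1 p a * ket3 1 1 1 q b +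
      (ket3 0 0 1 p a + ket3 0 1 0 p a + ket3 1 0 0 p a) *
        (ket3 0 0 1 q b + ket3 0 1 0 q b + ket3 1 0 0 q b) +
      (ket3 0 1 1 p a + ket3 1 0 1 p a + ket3 1 1 0 p a) *
        (ket3 0 1 1 q b + ket3 1 0 1 q b + ket3 1 1 0 q b)
    = if wt p = wt q then 1 else 0 := by
  obtain ⟨⟨x, y⟩, z⟩ := p
  obtain ⟨⟨x', y'⟩, z'⟩ := q
  fin_cases x <;> fin_cases y <;> fin_cases z <;> fin_cases x' <;> fin_cases y' <;> fin_cases z' <;>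
    simp [ket3, ket, wt, Matrix.add_apply, kroneckerMap_apply]

set_option maxHeartbeats 1000000 in
/-- integration over a parameter with three positive and three
negative occurrences (entrywise integration). -/
theorem integrate_three_occurrences (k : ℤ) (hk : k ≠ 0) (m n : ℕ)
    (A : Matrix (((Fin 2 × Fin 2) × Fin 2) × Fin (2 ^ n))
      (((Fin 2 × Fin 2) × Fin 2) × Fin (2 ^ m)) ℂ) :
    ∀ (i : ((Fin 1 × Fin 1) × Fin 1) × Fin (2 ^ n))
      (j : ((Fin 1 × Fin 1) × Fin 1) × Fin (2 ^ m)),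
      (1 / (2 * Real.pi) : ℂ) *
        (∫ α in (-Real.pi)..Real.pi,
          (((((r k (-α))ᵀ ⊗ₖ (r k (-α))ᵀ) ⊗ₖ (r k (-α))ᵀ) ⊗ₖ
              (1 : Matrix (Fin (2 ^ n)) (Fin (2 ^ n)) ℂ)) * A *
            (((r k α ⊗ₖ r k α) ⊗ₖ r k α) ⊗ₖ
              (1 : Matrix (Fin (2 ^ m)) (Fin (2 ^ m)) ℂ))) i j) =
      (((ket3 0 0 0)ᵀ ⊗ₖ (1 : Matrix (Fin (2 ^ n)) (Fin (2 ^ n)) ℂ)) * A *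
          (ket3 0 0 0 ⊗ₖ (1 : Matrix (Fin (2 ^ m)) (Fin (2 ^ m)) ℂ)) +
        ((ket3 1 1 1)ᵀ ⊗ₖ (1 : Matrix (Fin (2 ^ n)) (Fin (2 ^ n)) ℂ)) * A *
          (ket3 1 1 1 ⊗ₖ (1 : Matrix (Fin (2 ^ m)) (Fin (2 ^ m)) ℂ)) +
        ((ket3 0 0 1 + ket3 0 1 0 + ket3 1 0 0)ᵀ ⊗ₖ (1 : Matrix (Fin (2 ^ n)) (Fin (2 ^ n)) ℂ)) * A *
          ((ket3 0 0 1 + ket3 0 1 0 + ket3 1 0 0) ⊗ₖ (1 : Matrix (Fin (2 ^ m)) (Fin (2 ^ m)) ℂ)) +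
        ((ket3 0 1 1 + ket3 1 0 1 + ket3 1 1 0)ᵀ ⊗ₖ (1 : Matrix (Fin (2 ^ n)) (Fin (2 ^ n)) ℂ)) * A *
          ((ket3 0 1 1 + ket3 1 0 1 + ket3 1 1 0) ⊗ₖ (1 : Matrix (Fin (2 ^ m)) (Fin (2 ^ m)) ℂ))) i j := by
  intro i j
  simp only [Matrix.add_apply, expand, rfac, cfac, Matrix.transpose_apply]
  have hterm : ∀ (p q : (Fin 2 × Fin 2) × Fin 2) (α : ℝ),
      Complex.exp (Complex.I * k * ((-α : ℝ) : ℂ)) ^ wt p * A (p, i.2) (q, j.2) *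
        Complex.exp (Complex.I * k * (α : ℂ)) ^ wt q
      = A (p, i.2) (q, j.2) *
          Complex.exp (Complex.I * ((k * ((wt q : ℤ) - (wt p : ℤ))) : ℤ) * (α : ℂ)) := by
    intro p q α
    rw [← Complex.exp_nat_mul, ← Complex.exp_nat_mul]
    have h1 : Complex.exp ((wt p : ℂ) * (Complex.I * k * ((-α : ℝ) : ℂ))) *
        Complex.exp ((wt q : ℂ) * (Complex.I * k * (α : ℂ)))
        = Complex.exp (Complex.I * ((k * ((wt q : ℤ) - (wt p : ℤ))) : ℤ) * (α : ℂ)) := by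
      rw [← Complex.exp_add]; congr 1; push_cast; ring
    calc Complex.exp ((wt p : ℂ) * (Complex.I * k * ((-α : ℝ) : ℂ))) * A (p, i.2) (q, j.2) *
          Complex.exp ((wt q : ℂ) * (Complex.I * k * (α : ℂ)))
        = A (p, i.2) (q, j.2) * (Complex.exp ((wt p : ℂ) * (Complex.I * k * ((-α : ℝ) : ℂ))) *
            Complex.exp ((wt q : ℂ) * (Complex.I * k * (α : ℂ)))) := by ring
      _ = _ := by rw [h1]
  simp only [hterm]
  have hcont : ∀ (d : ℂ) (c : ℤ), Continuous fun α : ℝ =>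
      d * Complex.exp (Complex.I * (c : ℂ) * (α : ℂ)) := by
    intro d c
    exact continuous_const.mul (Complex.continuous_exp.comp
      (continuous_const.mul Complex.continuous_ofReal))
  rw [intervalIntegral.integral_finset_sum (fun p _ =>
    ((continuous_finset_sum _ (fun q _ => hcont _ _)).intervalIntegrable _ _))]
  have hswap2 : ∀ p : (Fin 2 × Fin 2) × Fin 2,
      (∫ α in (-Real.pi)..Real.pi, ∑ q : (Fin 2 × Fin 2) × Fin 2,
        A (p, i.2) (q, j.2) * Complex.exp (Complex.I * ((k * ((wt q : ℤ) - (wt p : ℤ))) : ℤ) * (α : ℂ)))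
      = ∑ q : (Fin 2 × Fin 2) × Fin 2, ∫ α in (-Real.pi)..Real.pi,
          A (p, i.2) (q, j.2) * Complex.exp (Complex.I * ((k * ((wt q : ℤ) - (wt p : ℤ))) : ℤ) * (α : ℂ)) :=
    fun p => intervalIntegral.integral_finset_sum
      (fun q _ => (hcont _ _).intervalIntegrable _ _)
  simp only [hswap2, intervalIntegral.integral_const_mul, int_exp]
  simp only [← Finset.sum_add_distrib]
  rw [Finset.mul_sum]
  refine Finset.sum_congr rfl fun p _ => ?_
  rw [Finset.mul_sum]
  refine Finset.sum_congr rfl fun q _ => ?_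
  have hcf := coef p q i.1 j.1
  have hπ : (2 * (Real.pi : ℂ)) ≠ 0 := by
    simp [Complex.ofReal_ne_zero, Real.pi_ne_zero]
  by_cases h : wt p = wt q
  · have hc : k * ((wt q : ℤ) - (wt p : ℤ)) = 0 := by rw [h]; ring
    rw [if_pos hc]
    rw [if_pos h] at hcf
    have e1 : (1 / (2 * (Real.pi : ℂ))) * (A (p, i.2) (q, j.2) * (2 * Real.pi)) =
        A (p, i.2) (q, j.2) := by field_simp
    rw [e1]
    linear_combination (-(A (p, i.2) (q, j.2))) * hcf
  · have hc : k * ((wt q : ℤ) - (wt p : ℤ)) ≠ 0 := by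
      intro hcc
      rcases mul_eq_zero.mp hcc with h1 | h1
      · exact hk h1
      · exact h (by omega)
    rw [if_neg hc, mul_zero, mul_zero]
    rw [if_neg h] at hcf
    linear_combination (-(A (p, i.2) (q, j.2))) * hcf
end
end
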